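/- Let ω ∈ ℂ with positive imaginary part, and set L = 𝒪 = ℤ + ℤω (a lattice in ℂ). If R - r ≥ |ω| with 0 ≤ r < R, then the closed annulus A(0, r, R) = {z ∈ ℂ : r ≤ |z| ≤ R} projects onto the whole torus ℂ/L under the canonical projection; i.e., A(0,r,R) + L = ℂ. -/

import Mathlib

open Pointwise

/-- `ω` is the standard generator of the ring of integers of an imaginary quadratic field:
`ω = i√|D|/2` if the (fundamental) discriminant `D ≡ 0 mod 4`, and `ω = (1+i√|D|)/2` if
`D ≡ 1 mod 4`. -/
def IsImagQuadOmega (ω : ℂ) : Prop :=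
  ∃ D : ℤ, D < 0 ∧
    ((Squarefree (D / 4) ∧ (D / 4) % 4 ≠ 1 ∧ D % 4 = 0 ∧
        ω = Complex.I * Real.sqrt |(D : ℝ)| / 2) ∨
      (Squarefree D ∧ D % 4 = 1 ∧
        ω = (1 + Complex.I * Real.sqrt |(D : ℝ)|) / 2))

/-- `O ⊆ ℂ` is (the image of) the ring of integers `ℤ[ω]` of an imaginary quadratic field. -/
def IsImagQuadRing (O : Subring ℂ) : Prop :=
  ∃ ω : ℂ, IsImagQuadOmega ω ∧ (O : Set ℂ) = {z | ∃ a b : ℤ, z = a + b * ω}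

/-- `p` and `q` are coprime in `O`, i.e. `pO + qO = O`. -/
def CoprimeIn (O : Subring ℂ) (p q : ℂ) : Prop :=
  ∃ a ∈ O, ∃ b ∈ O, a * p + b * q = 1

/-!
Subtracting a suitable integer multiple of `ω` moves any point into the strip
`|Im z| ≤ Im ω / 2`, and subtracting a further integer then brings it within
`(1 + Im ω) / 2 ≤ ‖ω‖ ≤ R` of the origin. Along the translates `z - n`, `n = 0, 1, 2, …`,
the distance to the origin changes by at most `1` per step and eventually exceeds `r`;
as `R - r ≥ ‖ω‖ ≥ 1`, the first translate at distance `≥ r` is still at distance `≤ R`.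
-/

theorem IsImagQuadOmega.exists_sqrt {ω : ℂ} (hω : IsImagQuadOmega ω) :
    ∃ d : ℝ, 3 ≤ d ∧
      ((4 ≤ d ∧ ω = Complex.I * Real.sqrt d / 2) ∨ ω = (1 + Complex.I * Real.sqrt d) / 2) := by
  obtain ⟨D, hD, ⟨-, -, hD4, rfl⟩ | ⟨-, hD4, rfl⟩⟩ := hω
  · have : (4 : ℝ) ≤ |(D : ℝ)| := by
      rw [← Int.cast_abs, abs_of_neg hD]; exact_mod_cast (by omega : 4 ≤ -D)
    exact ⟨_, by linarith, .inl ⟨this, rfl⟩⟩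
  · have : (3 : ℝ) ≤ |(D : ℝ)| := by
      rw [← Int.cast_abs, abs_of_neg hD]; exact_mod_cast (by omega : 3 ≤ -D)
    exact ⟨_, this, .inr rfl⟩

theorem IsImagQuadOmega.im_pos {ω : ℂ} (hω : IsImagQuadOmega ω) : 0 < ω.im := by
  obtain ⟨d, hd, ⟨-, rfl⟩ | rfl⟩ := hω.exists_sqrt <;>
    simpa using Real.sqrt_pos.mpr (by linarith : 0 < d)

theorem IsImagQuadOmega.one_le_norm {ω : ℂ} (hω : IsImagQuadOmega ω) : 1 ≤ ‖ω‖ := by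
  obtain ⟨d, hd, ⟨hd4, rfl⟩ | rfl⟩ := hω.exists_sqrt
  · have : 2 ≤ Real.sqrt d := Real.le_sqrt_of_sq_le (by linarith)
    simp only [Complex.norm_div, Complex.norm_mul, Complex.norm_I, Complex.norm_real,
      Real.norm_eq_abs, abs_of_nonneg (Real.sqrt_nonneg d), one_mul, Complex.norm_ofNat]
    linarith
  · rw [Complex.norm_def, Real.one_le_sqrt, Complex.normSq_apply]
    simp only [Complex.div_ofNat_re, Complex.div_ofNat_im, Complex.add_re, Complex.add_im,
      Complex.one_re, Complex.one_im, Complex.I_mul_re, Complex.I_mul_im, Complex.ofReal_re,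
      Complex.ofReal_im]
    nlinarith [Real.mul_self_sqrt (by linarith : 0 ≤ d)]

theorem exists_mem_Icc_of_succ_le_add {α : Type*} [AddCommGroup α] [LinearOrder α]
    [IsOrderedAddMonoid α] {u : ℕ → α} {δ r R : α} (hstep : ∀ n, u (n + 1) ≤ u n + δ)
    (h₀ : u 0 ≤ R) (hδ : r + δ ≤ R) (n : ℕ) (hn : r ≤ u n) : ∃ m, u m ∈ Set.Icc r R := by
  induction n with
  | zero => exact ⟨0, hn, h₀⟩
  | succ n ih =>
    by_cases h : r ≤ u n
    · exact ih h
    · exact ⟨n + 1, hn, ((hstep n).trans_lt (add_lt_add_left (not_le.mp h) δ)).le.trans hδ⟩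

theorem Complex.exists_nat_norm_sub_mem_Icc {z : ℂ} {r R : ℝ} (hz : ‖z‖ ≤ R)
    (hrR : r + 1 ≤ R) : ∃ n : ℕ, ‖z - n‖ ∈ Set.Icc r R := by
  have hstep (n : ℕ) : ‖z - (n + 1 : ℕ)‖ ≤ ‖z - n‖ + 1 := by
    simpa [sub_sub] using norm_sub_le (z - n) 1
  have hfar : r ≤ ‖z - ⌈r + R⌉₊‖ := by
    have := norm_sub_norm_le (⌈r + R⌉₊ : ℂ) z
    rw [Complex.norm_natCast, norm_sub_rev] at this
    linarith [Nat.le_ceil (r + R)]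
  exact exists_mem_Icc_of_succ_le_add hstep (by simpa using hz) hrR _ hfar

theorem Complex.exists_int_norm_sub_add_mul_le {ω : ℂ} (hω : 0 < ω.im) (w : ℂ) :
    ∃ a b : ℤ, ‖w - (a + b * ω)‖ ≤ (1 + ω.im) / 2 := by
  set b := round (w.im / ω.im)
  set a := round (w - b * ω).re
  refine ⟨a, b, ?_⟩
  have hre : |(w - (a + b * ω)).re| ≤ 1 / 2 := by
    rw [show (w - (a + b * ω)).re = (w - b * ω).re - a by
      simp only [Complex.sub_re, Complex.add_re, Complex.intCast_re, Complex.mul_re,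
        Complex.intCast_im, zero_mul, sub_zero]
      ring]
    exact abs_sub_round _
  have him : |(w - (a + b * ω)).im| ≤ ω.im / 2 := by
    have : (w - (a + b * ω)).im = (w.im / ω.im - b) * ω.im := by
      simp only [Complex.sub_im, Complex.add_im, Complex.intCast_im, Complex.mul_im,
        Complex.intCast_re, zero_mul, add_zero, zero_add]
      field_simp
    rw [this, abs_mul, abs_of_pos hω]
    nlinarith [abs_sub_round (w.im / ω.im)]
  linarith [Complex.norm_le_abs_re_add_abs_im (w - (a + b * ω))]

theorem annulus_add_lattice_eq_univ {ω : ℂ} (hω : 0 < ω.im) {r R : ℝ}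
    (hR : (1 + ω.im) / 2 ≤ R) (hrR : r + 1 ≤ R) :
    {z : ℂ | r ≤ ‖z‖ ∧ ‖z‖ ≤ R} + {z : ℂ | ∃ a b : ℤ, z = a + b * ω} = Set.univ := by
  refine Set.eq_univ_of_forall fun w => ?_
  obtain ⟨a, b, hab⟩ := Complex.exists_int_norm_sub_add_mul_le hω w
  obtain ⟨n, hn⟩ := Complex.exists_nat_norm_sub_mem_Icc (hab.trans hR) hrR
  exact ⟨_, hn, (a + n : ℤ) + b * ω, ⟨a + n, b, rfl⟩, by push_cast; ring⟩

theorem stmt_6_general (ω : ℂ) (hω : IsImagQuadOmega ω) (r R : ℝ) (hr : 0 ≤ r)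
    (hgap : ‖ω‖ ≤ R - r) :
    {z : ℂ | r ≤ ‖z‖ ∧ ‖z‖ ≤ R} +
        {z : ℂ | ∃ a b : ℤ, z = a + b * ω} = Set.univ := by
  have hnorm := hω.one_le_norm
  have him := Complex.im_le_norm ω
  exact annulus_add_lattice_eq_univ hω.im_pos (by linarith) (by linarith)

/-- If `ω` is the standard generator of the ring of integers of an imaginary quadratic field
and `0 ≤ r < R` with `R - r ≥ |ω|`, then the closed annulus `A(0,r,R)` projects onto the
whole torus `ℂ/(ℤ + ℤω)`, i.e. `A(0,r,R) + (ℤ + ℤω) = ℂ`. -/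
theorem stmt_6 (ω : ℂ) (hω : IsImagQuadOmega ω) (r R : ℝ) (hr : 0 ≤ r) (hrR : r < R)
    (hgap : ‖ω‖ ≤ R - r) :
    {z : ℂ | r ≤ ‖z‖ ∧ ‖z‖ ≤ R} +
        {z : ℂ | ∃ a b : ℤ, z = a + b * ω} = Set.univ :=
  stmt_6_general ω hω r R hr hgap
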